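/- arXiv:1201.1229 — 2 statements merged into one kernel-verified Lean document; each statement's English description precedes it below -/
import Mathlib

section
/- If p, q are positive coprime integers with p ≠ q and Q_{pq} has an integer root A_0 > 0, then writing B_0 = p^2q^2/A_0, the polynomial Q_{pq}(t) factors in Z[t] as (t^2 - A_0^2)·(t^8 + C_6 t^6 + C_4 t^4 + D_6 p^2 q^2 B_0^2 t^2 + p^6 q^6 B_0^2) where C_6 = A_0^2 + (2q^2+p^2)(3q^2-2p^2), D_6 = B_0^2 + (2p^2+q^2)(3p^2-2q^2), and C_4 = A_0^4 + (2q^2+p^2)(3q^2-2p^2)A_0^2 + p^8-14p^6q^2+4p^4q^4+10p^2q^6+q^8. -/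
/-! Dividing `Q_{pq}(t)` by `t² - A₀²` leaves a quotient whose two top coefficients are forced,
and whose two bottom coefficients can be written symmetrically under `p ↔ q`, `A₀ ↔ B₀` thanks to
`A₀ B₀ = p² q²`. Comparing coefficients, the product then agrees with `Q_{pq}` except possibly in
the `t⁴` coefficient; evaluating at the root `A₀ ≠ 0` shows that this last discrepancy vanishes. -/

def Q (p q t : ℤ) : ℤ :=
  t^10 + (2*q^2+p^2)*(3*q^2-2*p^2)*t^8
    + (q^8+10*p^2*q^6+4*p^4*q^4-14*p^6*q^2+p^8)*t^6
    - p^2*q^2*(p^8+10*q^2*p^6+4*q^4*p^4-14*q^6*p^2+q^8)*t^4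
    - p^6*q^6*(2*p^2+q^2)*(3*p^2-2*q^2)*t^2
    - q^10*p^10

open Polynomial in
noncomputable def Qpoly (p q : ℤ) : Polynomial ℤ :=
  X^10 + C ((2*q^2+p^2)*(3*q^2-2*p^2)) * X^8
    + C (q^8+10*p^2*q^6+4*p^4*q^4-14*p^6*q^2+p^8) * X^6
    - C (p^2*q^2*(p^8+10*q^2*p^6+4*q^4*p^4-14*q^6*p^2+q^8)) * X^4
    - C (p^6*q^6*(2*p^2+q^2)*(3*p^2-2*q^2)) * X^2
    - C (q^10*p^10)

namespace Polynomial

variable {R : Type*} [CommRing R]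

theorem X_sq_sub_C_mul_even_octic (s u v w z : R) :
    (X^2 - C s) * (X^8 + C u * X^6 + C v * X^4 + C w * X^2 + C z) =
      X^10 + C (u - s) * X^8 + C (v - s*u) * X^6 + C (w - s*v) * X^4 + C (z - s*w) * X^2
        + C (-(s*z)) := by
  simp only [C_sub, C_mul, C_neg]
  ring

theorem even_decic_eq_X_sq_sub_C_mul_of_isRoot [NoZeroDivisors R]
    {a b c d e r s u v w z : R} (hr : r ≠ 0) (hs : s = r^2)
    (hroot : (X^10 + C a * X^8 + C b * X^6 + C c * X^4 + C d * X^2 + C e).IsRoot r)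
    (ha : a = u - s) (hb : b = v - s*u) (hd : d = z - s*w) (he : e = -(s*z)) :
    X^10 + C a * X^8 + C b * X^6 + C c * X^4 + C d * X^2 + C e =
      (X^2 - C s) * (X^8 + C u * X^6 + C v * X^4 + C w * X^2 + C z) := by
  have hc : c = w - s*v := by
    have hr4 : (c - (w - s*v)) * r^4 = 0 := by
      simp only [IsRoot, eval_add, eval_mul, eval_pow, eval_C, eval_X] at hroot
      subst ha hb hd he hs
      linear_combination hroot
    exact sub_eq_zero.mp ((mul_eq_zero.mp hr4).resolve_right (pow_ne_zero 4 hr))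
  rw [X_sq_sub_C_mul_even_octic, ha, hb, hc, hd, he]

end Polynomial

open Polynomial in
theorem eval_Qpoly (p q t : ℤ) : (Qpoly p q).eval t = Q p q t := by
  simp only [Qpoly, Q, eval_add, eval_sub, eval_mul, eval_pow, eval_C, eval_X]

open Polynomial in
theorem Q_factorization_general (p q A₀ B₀ : ℤ)
    (hA : 0 < A₀) (hroot : Q p q A₀ = 0)
    (hAB : A₀ * B₀ = p^2 * q^2) :
    Qpoly p q =
      (X^2 - C (A₀^2)) *
        (X^8 + C (A₀^2 + (2*q^2+p^2)*(3*q^2-2*p^2)) * X^6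
          + C (A₀^4 + (2*q^2+p^2)*(3*q^2-2*p^2)*A₀^2
              + p^8 - 14*p^6*q^2 + 4*p^4*q^4 + 10*p^2*q^6 + q^8) * X^4
          + C ((B₀^2 + (2*p^2+q^2)*(3*p^2-2*q^2)) * p^2 * q^2 * B₀^2) * X^2
          + C (p^6 * q^6 * B₀^2)) := by
  have hAB_sq : A₀^2 * B₀^2 = p^4 * q^4 := by linear_combination (A₀*B₀ + p^2*q^2) * hAB
  have hQ : Qpoly p q =
      X^10 + C ((2*q^2+p^2)*(3*q^2-2*p^2)) * X^8
        + C (q^8+10*p^2*q^6+4*p^4*q^4-14*p^6*q^2+p^8) * X^6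
        + C (-(p^2*q^2*(p^8+10*q^2*p^6+4*q^4*p^4-14*q^6*p^2+q^8))) * X^4
        + C (-(p^6*q^6*(2*p^2+q^2)*(3*p^2-2*q^2))) * X^2
        + C (-(q^10*p^10)) := by
    simp only [Qpoly, C_neg]
    ring
  rw [hQ]
  refine even_decic_eq_X_sq_sub_C_mul_of_isRoot hA.ne' rfl ?_ (by ring) (by ring) ?_ ?_
  · rw [← hQ, IsRoot, eval_Qpoly, hroot]
  · linear_combination (B₀^2 + (2*p^2+q^2)*(3*p^2-2*q^2)) * p^2 * q^2 * hAB_sq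
  · linear_combination p^6 * q^6 * hAB_sq

open Polynomial in
theorem Q_factorization (p q A₀ B₀ : ℤ)
    (hp : 0 < p) (hq : 0 < q) (hpq : IsCoprime p q) (hne : p ≠ q)
    (hA : 0 < A₀) (hroot : Q p q A₀ = 0)
    (hB : 0 < B₀) (hAB : A₀ * B₀ = p^2 * q^2) :
    Qpoly p q =
      (X^2 - C (A₀^2)) *
        (X^8 + C (A₀^2 + (2*q^2+p^2)*(3*q^2-2*p^2)) * X^6
          + C (A₀^4 + (2*q^2+p^2)*(3*q^2-2*p^2)*A₀^2
              + p^8 - 14*p^6*q^2 + 4*p^4*q^4 + 10*p^2*q^6 + q^8) * X^4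
          + C ((B₀^2 + (2*p^2+q^2)*(3*p^2-2*q^2)) * p^2 * q^2 * B₀^2) * X^2
          + C (p^6 * q^6 * B₀^2)) :=
  Q_factorization_general p q A₀ B₀ hA hroot hAB
end

section
/- For positive integers p, q with gcd(p,q)=1 and p ≠ q, the Diophantine equation Q_{pq}(t) = 0 is solvable in integers t if and only if there exist six positive pairwise coprime integers a_p, b_p, c_p, a_q, b_q, c_q with p = a_p b_p c_p, q = a_q b_q c_q such that, setting A_0 = a_p^2 c_p a_q^2 c_q and B_0 = b_p^2 c_p b_q^2 c_q, one has A_0(A_0^4 + (2q^2+p^2)(3q^2-2p^2)A_0^2 + p^8-14p^6q^2+4p^4q^4+10p^2q^6+q^8) = B_0(B_0^4 + (2p^2+q^2)(3p^2-2q^2)B_0^2 + q^8-14q^6p^2+4q^4p^4+10q^2p^6+p^8). In that case t = ±A_0 are integer roots of Q_{pq}. -/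
def balanceFactor (p q x : ℤ) : ℤ :=
  x^4 + (2*q^2+p^2)*(3*q^2-2*p^2)*x^2 + p^8 - 14*p^6*q^2 + 4*p^4*q^4 + 10*p^2*q^6 + q^8

lemma Q_neg (p q t : ℤ) : Q p q (-t) = Q p q t := by
  unfold Q; ring

lemma Q_eq_pow_mul_sub (p q t : ℤ) :
    Q p q t = t^5 * (t * balanceFactor p q t) - p^2*q^2 * ((p^2*q^2)^4
      + (2*p^2+q^2)*(3*p^2-2*q^2)*(p^2*q^2)^2*t^2
      + (q^8 - 14*q^6*p^2 + 4*q^4*p^4 + 10*q^2*p^6 + p^8)*t^4) := by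
  unfold Q balanceFactor; ring

lemma Q_eq_of_mul_eq {p q t s : ℤ} (h : t * s = p^2 * q^2) :
    Q p q t = t^5 * (t * balanceFactor p q t - s * balanceFactor q p s) := by
  rw [Q_eq_pow_mul_sub, ← h]; unfold balanceFactor; ring

lemma Q_eq_zero_of_balance {p q t s : ℤ} (h : t * s = p^2 * q^2)
    (hbal : t * balanceFactor p q t = s * balanceFactor q p s) : Q p q t = 0 := by
  rw [Q_eq_of_mul_eq h, hbal, sub_self, mul_zero]

-- The rational root theorem for `y / x`, a root of `Y⁵ + a Y³ + b Y - c`.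
lemma dvd_of_mul_eq_mul_pow_five {x y a b c : ℤ} (hx : x ≠ 0)
    (h : y * (y^4 + a*y^2*x^2 + b*x^4) = c * x^5) : x ∣ y := by
  obtain ⟨g, x', y', hg, hcop, rfl, rfl⟩ :=
    Int.exists_gcd_one' (Int.gcd_pos_of_ne_zero_left y hx)
  have hdvd : x' ∣ y'^5 := by
    refine ⟨c*x'^4 - a*y'^3*x' - b*y'*x'^3,
      mul_left_cancel₀ (pow_ne_zero 5 (by positivity : (g:ℤ) ≠ 0)) ?_⟩
    linear_combination h
  have hunit : IsUnit x' :=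
    (Int.isCoprime_iff_gcd_eq_one.mpr hcop).pow_right.isUnit_of_dvd' dvd_rfl hdvd
  exact mul_dvd_mul_right hunit.dvd _

lemma exists_balance_of_Q_eq_zero {p q t : ℤ} (hp : p ≠ 0) (hq : q ≠ 0) (ht : Q p q t = 0) :
    ∃ s, t * s = p^2 * q^2 ∧ t * balanceFactor p q t = s * balanceFactor q p s := by
  have ht0 : t ≠ 0 := by
    rintro rfl
    simp [Q, hp, hq] at ht
  obtain ⟨s, hs⟩ : t ∣ p^2 * q^2 := dvd_of_mul_eq_mul_pow_five ht0
    (a := (2*p^2+q^2)*(3*p^2-2*q^2)) (b := q^8 - 14*q^6*p^2 + 4*q^4*p^4 + 10*q^2*p^6 + p^8)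
    (c := t * balanceFactor p q t) (by linear_combination Q_eq_pow_mul_sub p q t - ht)
  refine ⟨s, hs.symm, ?_⟩
  rw [Q_eq_of_mul_eq hs.symm] at ht
  exact sub_eq_zero.mp ((mul_eq_zero.mp ht).resolve_left (pow_ne_zero 5 ht0))

lemma isCoprime_balanceFactor {p q x d : ℤ} (hpq : IsCoprime p q) (hdx : d ∣ x)
    (hd : d ∣ p * q) :
    IsCoprime d (balanceFactor p q x) := by
  have hp : IsCoprime p (p^8 + q^8) := by
    simpa [add_comm, pow_succ'] using hpq.pow_right (n := 8) |>.add_mul_left_right (p^7)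
  have hq : IsCoprime q (p^8 + q^8) := by
    simpa [pow_succ'] using hpq.symm.pow_right (n := 8) |>.add_mul_left_right (q^7)
  obtain ⟨x, rfl⟩ := hdx
  obtain ⟨r, hr⟩ := hd
  have hbf : balanceFactor p q (d*x) = p^8 + q^8
      + d * (x * (d*x)^3 + (2*q^2+p^2)*(3*q^2-2*p^2) * x * (d*x)
        + r*p*q*(-14*p^4 + 4*p^2*q^2 + 10*q^4)) := by
    unfold balanceFactor
    linear_combination (p*q*(-14*p^4 + 4*p^2*q^2 + 10*q^4)) * hr
  rw [hbf]
  exact ((hp.mul_left hq).of_isCoprime_of_dvd_left ⟨r, hr⟩).add_mul_left_right _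

lemma exists_sq_mul_of_mul_eq_sq {T B n : ℕ} {u w : ℤ} (hT : 0 < T) (hTB : T * B = n^2)
    (hbal : (T:ℤ) * u = B * w) (hu : IsCoprime ((T.gcd B : ℕ) : ℤ) u)
    (hw : IsCoprime ((T.gcd B : ℕ) : ℤ) w) :
    ∃ α β γ : ℕ, α.Coprime β ∧ α.Coprime γ ∧ β.Coprime γ ∧
      T = α^2 * γ ∧ B = β^2 * γ ∧ n = α * β * γ := by
  obtain ⟨A, B', hAB', hTA, hBB'⟩ := Nat.exists_coprime T B
  set γ := T.gcd B
  have hγ : 0 < γ := Nat.gcd_pos_of_pos_left B hT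
  have hcancel : (A:ℤ) * u = B' * w := by
    refine mul_right_cancel₀ (by positivity : (γ:ℤ) ≠ 0) ?_
    rw [hTA, hBB'] at hbal
    push_cast at hbal
    linear_combination hbal
  have hAw : (A:ℤ) ∣ w :=
    (Nat.isCoprime_iff_coprime.mpr hAB').dvd_of_dvd_mul_left ⟨u, hcancel.symm⟩
  have hB'u : (B':ℤ) ∣ u :=
    (Nat.isCoprime_iff_coprime.mpr hAB'.symm).dvd_of_dvd_mul_left ⟨w, hcancel⟩
  have hγA : γ.Coprime A := Nat.isCoprime_iff_coprime.mp (hw.of_isCoprime_of_dvd_right hAw)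
  have hγB' : γ.Coprime B' := Nat.isCoprime_iff_coprime.mp (hu.of_isCoprime_of_dvd_right hB'u)
  obtain ⟨α, rfl⟩ : ∃ α, A = α^2 :=
    exists_eq_pow_of_mul_eq_pow (Nat.isUnit_iff.mpr (hAB'.mul_right (hγA.symm.pow_right 2)))
      (by rw [← hTB, hTA, hBB']; ring : A * (B' * γ^2) = n^2)
  obtain ⟨β, rfl⟩ : ∃ β, B' = β^2 :=
    exists_eq_pow_of_mul_eq_pow (Nat.isUnit_iff.mpr (hAB'.symm.mul_right (hγB'.symm.pow_right 2)))
      (by rw [← hTB, hTA, hBB']; ring : B' * (α^2 * γ^2) = n^2)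
  refine ⟨α, β, γ, ?_, ?_, ?_, hTA, hBB', ?_⟩
  · exact (Nat.coprime_pow_left_iff two_pos _ _).mp
      ((Nat.coprime_pow_right_iff two_pos _ _).mp hAB')
  · exact (Nat.coprime_pow_left_iff two_pos _ _).mp hγA.symm
  · exact (Nat.coprime_pow_left_iff two_pos _ _).mp hγB'.symm
  · exact Nat.pow_left_injective two_ne_zero
      (show n^2 = (α * β * γ)^2 by rw [← hTB, hTA, hBB']; ring)

lemma exists_nat_balance_of_Q_eq_zero {p q : ℕ} {t : ℤ} (hp : 0 < p) (hq : 0 < q)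
    (ht : Q p q t = 0) :
    ∃ T B : ℕ, 0 < T ∧ T * B = (p * q)^2 ∧
      (T:ℤ) * balanceFactor p q T = B * balanceFactor q p B := by
  have ht' : Q p q |t| = 0 := by
    rcases abs_choice t with h | h <;> rw [h] <;> simp only [Q_neg, ht]
  obtain ⟨s, hs, hbal⟩ := exists_balance_of_Q_eq_zero (by positivity) (by positivity) ht'
  have hpos : 0 < |t| * s := hs ▸ by positivity
  have ht0 : t ≠ 0 := by rintro rfl; simp at hpos
  obtain ⟨B, rfl⟩ := Int.eq_ofNat_of_zero_le (pos_of_mul_pos_right hpos (abs_nonneg t)).le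
  refine ⟨t.natAbs, B, Int.natAbs_pos.mpr ht0, ?_, by rwa [Int.natCast_natAbs]⟩
  exact Nat.cast_injective (R := ℤ) (by push_cast; rw [hs]; ring)

lemma exists_sq_mul_of_balance {p q T B : ℕ} (hpq : p.Coprime q) (hT : 0 < T)
    (hTB : T * B = (p * q)^2)
    (hbal : (T:ℤ) * balanceFactor p q T = B * balanceFactor q p B) :
    ∃ α β γ : ℕ, α.Coprime β ∧ α.Coprime γ ∧ β.Coprime γ ∧
      T = α^2 * γ ∧ B = β^2 * γ ∧ p * q = α * β * γ := by
  have hpq' : IsCoprime (p:ℤ) q := Nat.isCoprime_iff_coprime.mpr hpq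
  have hγpq : T.gcd B ∣ p * q := by
    rw [← Nat.pow_dvd_pow_iff two_ne_zero, ← hTB, sq]
    exact Nat.mul_dvd_mul (Nat.gcd_dvd_left T B) (Nat.gcd_dvd_right T B)
  exact exists_sq_mul_of_mul_eq_sq hT hTB hbal
    (isCoprime_balanceFactor hpq' (by exact_mod_cast Nat.gcd_dvd_left T B)
      (by exact_mod_cast hγpq))
    (isCoprime_balanceFactor hpq'.symm (by exact_mod_cast Nat.gcd_dvd_right T B)
      (by rw [mul_comm]; exact_mod_cast hγpq))

lemma exists_split_of_mul_eq_mul {α β γ p q : ℕ} (hpq : p.Coprime q) (hαβ : α.Coprime β)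
    (hαγ : α.Coprime γ) (hβγ : β.Coprime γ) (h : p * q = α * β * γ) :
    ∃ a b c a' b' c' : ℕ, [a, b, c, a', b', c'].Pairwise Nat.Coprime ∧
      α = a * a' ∧ β = b * b' ∧ γ = c * c' ∧ p = a * b * c ∧ q = a' * b' * c' := by
  have eq_gcd_mul_gcd : ∀ x, x ∣ p * q → x = p.gcd x * q.gcd x := fun x hx => by
    rw [Nat.gcd_comm p, Nat.gcd_comm q, ← hpq.gcd_mul x, Nat.gcd_eq_left hx]
  have eq_gcd_mul_gcd_mul_gcd : ∀ y, y ∣ α * β * γ → y = y.gcd α * y.gcd β * y.gcd γ :=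
    fun y hy => by
      rw [← hαβ.gcd_mul y, ← (hαγ.mul_left hβγ).gcd_mul y, Nat.gcd_eq_left hy]
  have coprime_gcd : ∀ {x y X Y : ℕ}, x.Coprime y ∨ X.Coprime Y → (x.gcd X).Coprime (y.gcd Y)
    | _, _, _, _, .inl h =>
      (h.coprime_dvd_left (Nat.gcd_dvd_left _ _)).coprime_dvd_right (Nat.gcd_dvd_left _ _)
    | _, _, _, _, .inr h => h.gcd_both _ _
  refine ⟨p.gcd α, p.gcd β, p.gcd γ, q.gcd α, q.gcd β, q.gcd γ, ?_,
    eq_gcd_mul_gcd α ?_, eq_gcd_mul_gcd β ?_, eq_gcd_mul_gcd γ ?_,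
    eq_gcd_mul_gcd_mul_gcd p (h ▸ dvd_mul_right p q),
    eq_gcd_mul_gcd_mul_gcd q (h ▸ dvd_mul_left q p)⟩
  · simp only [List.pairwise_cons, List.mem_cons, List.not_mem_nil, List.Pairwise.nil,
      forall_eq_or_imp, IsEmpty.forall_iff, forall_const, and_true]
    and_intros <;> first | exact coprime_gcd (.inl hpq) | exact coprime_gcd (.inr ‹_›)
  · exact h ▸ (dvd_mul_right α β).mul_right γ
  · exact h ▸ (dvd_mul_left β α).mul_right γ
  · exact h ▸ dvd_mul_left γ _

theorem structural_theorem_general (p q : ℤ)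
    (hp : 0 < p) (hq : 0 < q) (hpq : IsCoprime p q) :
    ((∃ t : ℤ, Q p q t = 0) ↔
      ∃ aₚ bₚ cₚ a_q b_q c_q : ℤ,
        0 < aₚ ∧ 0 < bₚ ∧ 0 < cₚ ∧ 0 < a_q ∧ 0 < b_q ∧ 0 < c_q ∧
        List.Pairwise (fun x y => IsCoprime x y) [aₚ, bₚ, cₚ, a_q, b_q, c_q] ∧
        p = aₚ * bₚ * cₚ ∧ q = a_q * b_q * c_q ∧
        (aₚ^2 * cₚ * a_q^2 * c_q) *
          ((aₚ^2 * cₚ * a_q^2 * c_q)^4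
            + (2*q^2+p^2)*(3*q^2-2*p^2)*(aₚ^2 * cₚ * a_q^2 * c_q)^2
            + p^8 - 14*p^6*q^2 + 4*p^4*q^4 + 10*p^2*q^6 + q^8)
        = (bₚ^2 * cₚ * b_q^2 * c_q) *
          ((bₚ^2 * cₚ * b_q^2 * c_q)^4
            + (2*p^2+q^2)*(3*p^2-2*q^2)*(bₚ^2 * cₚ * b_q^2 * c_q)^2
            + q^8 - 14*q^6*p^2 + 4*q^4*p^4 + 10*q^2*p^6 + p^8)) ∧
    (∀ aₚ bₚ cₚ a_q b_q c_q : ℤ,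
        0 < aₚ → 0 < bₚ → 0 < cₚ → 0 < a_q → 0 < b_q → 0 < c_q →
        List.Pairwise (fun x y => IsCoprime x y) [aₚ, bₚ, cₚ, a_q, b_q, c_q] →
        p = aₚ * bₚ * cₚ → q = a_q * b_q * c_q →
        (aₚ^2 * cₚ * a_q^2 * c_q) *
          ((aₚ^2 * cₚ * a_q^2 * c_q)^4
            + (2*q^2+p^2)*(3*q^2-2*p^2)*(aₚ^2 * cₚ * a_q^2 * c_q)^2
            + p^8 - 14*p^6*q^2 + 4*p^4*q^4 + 10*p^2*q^6 + q^8)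
        = (bₚ^2 * cₚ * b_q^2 * c_q) *
          ((bₚ^2 * cₚ * b_q^2 * c_q)^4
            + (2*p^2+q^2)*(3*p^2-2*q^2)*(bₚ^2 * cₚ * b_q^2 * c_q)^2
            + q^8 - 14*q^6*p^2 + 4*q^4*p^4 + 10*q^2*p^6 + p^8) →
        Q p q (aₚ^2 * cₚ * a_q^2 * c_q) = 0 ∧
        Q p q (-(aₚ^2 * cₚ * a_q^2 * c_q)) = 0) := by
  refine ⟨⟨fun ⟨t, ht⟩ => ?forward, ?backward⟩, ?roots⟩
  case backward =>
    rintro ⟨a, b, c, a', b', c', -, -, -, -, -, -, -, rfl, rfl, hbal⟩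
    exact ⟨_, Q_eq_zero_of_balance (by ring) hbal⟩
  case roots =>
    rintro a b c a' b' c' - - - - - - - rfl rfl hbal
    have hQ := Q_eq_zero_of_balance (by ring) hbal
    exact ⟨hQ, (Q_neg _ _ _).trans hQ⟩
  lift p to ℕ using hp.le
  lift q to ℕ using hq.le
  have hpq' := Nat.isCoprime_iff_coprime.mp hpq
  obtain ⟨T, B, hT, hTB, hbal⟩ :=
    exists_nat_balance_of_Q_eq_zero (by exact_mod_cast hp) (by exact_mod_cast hq) ht
  obtain ⟨α, β, γ, hαβ, hαγ, hβγ, rfl, rfl, hαβγ⟩ :=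
    exists_sq_mul_of_balance hpq' hT hTB hbal
  obtain ⟨a, b, c, a', b', c', hcop, rfl, rfl, rfl, rfl, rfl⟩ :=
    exists_split_of_mul_eq_mul hpq' hαβ hαγ hβγ hαβγ
  have hA : (a:ℤ)^2 * c * a'^2 * c' = ((a * a')^2 * (c * c') : ℕ) := by push_cast; ring
  have hB : (b:ℤ)^2 * c * b'^2 * c' = ((b * b')^2 * (c * c') : ℕ) := by push_cast; ring
  have hpos : 0 < a * b * c ∧ 0 < a' * b' * c' := ⟨by exact_mod_cast hp, by exact_mod_cast hq⟩
  simp only [CanonicallyOrderedAdd.mul_pos] at hpos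
  refine ⟨a, b, c, a', b', c', ?_, ?_, ?_, ?_, ?_, ?_,
    List.pairwise_map.mpr (hcop.imp Nat.isCoprime_iff_coprime.mpr),
    by push_cast; ring, by push_cast; ring, by rw [hA, hB]; exact hbal⟩ <;> omega

theorem structural_theorem (p q : ℤ)
    (hp : 0 < p) (hq : 0 < q) (hpq : IsCoprime p q) (hne : p ≠ q) :
    ((∃ t : ℤ, Q p q t = 0) ↔
      ∃ aₚ bₚ cₚ a_q b_q c_q : ℤ,
        0 < aₚ ∧ 0 < bₚ ∧ 0 < cₚ ∧ 0 < a_q ∧ 0 < b_q ∧ 0 < c_q ∧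
        List.Pairwise (fun x y => IsCoprime x y) [aₚ, bₚ, cₚ, a_q, b_q, c_q] ∧
        p = aₚ * bₚ * cₚ ∧ q = a_q * b_q * c_q ∧
        (aₚ^2 * cₚ * a_q^2 * c_q) *
          ((aₚ^2 * cₚ * a_q^2 * c_q)^4
            + (2*q^2+p^2)*(3*q^2-2*p^2)*(aₚ^2 * cₚ * a_q^2 * c_q)^2
            + p^8 - 14*p^6*q^2 + 4*p^4*q^4 + 10*p^2*q^6 + q^8)
        = (bₚ^2 * cₚ * b_q^2 * c_q) *
          ((bₚ^2 * cₚ * b_q^2 * c_q)^4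
            + (2*p^2+q^2)*(3*p^2-2*q^2)*(bₚ^2 * cₚ * b_q^2 * c_q)^2
            + q^8 - 14*q^6*p^2 + 4*q^4*p^4 + 10*q^2*p^6 + p^8)) ∧
    (∀ aₚ bₚ cₚ a_q b_q c_q : ℤ,
        0 < aₚ → 0 < bₚ → 0 < cₚ → 0 < a_q → 0 < b_q → 0 < c_q →
        List.Pairwise (fun x y => IsCoprime x y) [aₚ, bₚ, cₚ, a_q, b_q, c_q] →
        p = aₚ * bₚ * cₚ → q = a_q * b_q * c_q →
        (aₚ^2 * cₚ * a_q^2 * c_q) *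
          ((aₚ^2 * cₚ * a_q^2 * c_q)^4
            + (2*q^2+p^2)*(3*q^2-2*p^2)*(aₚ^2 * cₚ * a_q^2 * c_q)^2
            + p^8 - 14*p^6*q^2 + 4*p^4*q^4 + 10*p^2*q^6 + q^8)
        = (bₚ^2 * cₚ * b_q^2 * c_q) *
          ((bₚ^2 * cₚ * b_q^2 * c_q)^4
            + (2*p^2+q^2)*(3*p^2-2*q^2)*(bₚ^2 * cₚ * b_q^2 * c_q)^2
            + q^8 - 14*q^6*p^2 + 4*q^4*p^4 + 10*q^2*p^6 + p^8) →
        Q p q (aₚ^2 * cₚ * a_q^2 * c_q) = 0 ∧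
        Q p q (-(aₚ^2 * cₚ * a_q^2 * c_q)) = 0) :=
  structural_theorem_general p q hp hq hpq
end
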